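/- arXiv:2407.21312 — 5 statements merged into one kernel-verified Lean document; each statement's English description precedes it below -/
import Mathlib

section
/- Let E be a real inner product space and let v ∈ E be a unit vector. Define the fold map h_v : E → E by h_v(x) = x when ⟪v, x⟫ ≥ 0 and h_v(x) = x − 2⟪v, x⟫·v when ⟪v, x⟫ < 0. Then h_v is 1-Lipschitz, i.e., ‖h_v(x) − h_v(y)‖ ≤ ‖x − y‖ for all x, y ∈ E. -/
open RealInnerProductSpace

/-- The fold map along the hyperplane `v^⊥`: it fixes the closed half-space
`{x : ⟪v, x⟫ ≥ 0}` and reflects the open half-space `{x : ⟪v, x⟫ < 0}`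
across the hyperplane `v^⊥`. -/
noncomputable def foldMap {E : Type*} [NormedAddCommGroup E] [InnerProductSpace ℝ E]
    (v : E) (x : E) : E :=
  if 0 ≤ ⟪v, x⟫ then x else x - (2 * ⟪v, x⟫) • v

private lemma foldAux {E : Type*} [NormedAddCommGroup E] [InnerProductSpace ℝ E]
    (v : E) (hv : ‖v‖ = 1) (x y : E) (c : ℝ)
    (h : c * (2 * ⟪v, x - y⟫ + c) ≤ 0) :
    ‖(x - y) + c • v‖ ≤ ‖x - y‖ := by
  have h2 : ‖(x - y) + c • v‖ ^ 2 ≤ ‖x - y‖ ^ 2 := by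
    rw [norm_add_sq_real, real_inner_smul_right, norm_smul, real_inner_comm]
    simp only [hv, Real.norm_eq_abs, mul_one, mul_pow, sq_abs]
    nlinarith [h]
  exact (pow_le_pow_iff_left₀ (norm_nonneg _) (norm_nonneg _) (by norm_num)).mp h2

theorem foldMap_lipschitz {E : Type*} [NormedAddCommGroup E] [InnerProductSpace ℝ E]
    (v : E) (hv : ‖v‖ = 1) :
    ∀ x y : E, ‖foldMap v x - foldMap v y‖ ≤ ‖x - y‖ := by
  intro x y
  unfold foldMap
  have hxy : ⟪v, x - y⟫ = ⟪v, x⟫ - ⟪v, y⟫ := inner_sub_right v x y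
  split_ifs with ha hb hb
  · exact le_refl _
  · push_neg at hb
    have : x - (y - (2 * ⟪v, y⟫) • v) = (x - y) + (2 * ⟪v, y⟫) • v := by abel
    rw [this]
    exact foldAux v hv x y _ (by nlinarith)
  · push_neg at ha
    have : x - (2 * ⟪v, x⟫) • v - y = (x - y) + (-(2 * ⟪v, x⟫)) • v := by
      rw [neg_smul]; abel
    rw [this]
    exact foldAux v hv x y _ (by nlinarith)
  · push_neg at ha hb
    have : x - (2 * ⟪v, x⟫) • v - (y - (2 * ⟪v, y⟫) • v)
        = (x - y) + (2 * ⟪v, y⟫ - 2 * ⟪v, x⟫) • v := by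
      rw [sub_smul]; abel
    rw [this]
    exact foldAux v hv x y _ (by nlinarith)
end

section
/- Let n ≥ 1, let S^n be the unit sphere in ℝ^{n+1}, let v ∈ ℝ^{n+1} be a unit vector, and let Σ be a closed subset of S^n contained in the open hemisphere {x ∈ S^n : ⟪v, x⟫ > 0}. Then there exists a map h : S^n → S^n such that: (i) h is 1-Lipschitz with respect to the Euclidean distance on S^n; (ii) h, viewed as a continuous map from S^n to S^n, is nullhomotopic; and (iii) h(x) = x for every x ∈ Σ. -/
open RealInnerProductSpace
open unitInterval

/-- Closed subsets of open hemispheres satisfy the wrapping property: given a closed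
subset `A` of the unit sphere `S^n ⊂ ℝ^{n+1}` contained in the open hemisphere
determined by a unit vector `v`, there is a `1`-Lipschitz self-map of the sphere which
is nullhomotopic and restricts to the identity on `A`. -/
theorem wrapping_of_closed_subset_open_hemisphere
    (n : ℕ) (hn : 1 ≤ n)
    (v : EuclideanSpace ℝ (Fin (n + 1))) (hv : ‖v‖ = 1)
    (A : Set (Metric.sphere (0 : EuclideanSpace ℝ (Fin (n + 1))) 1))
    (hAclosed : IsClosed A)
    (hAhemi : ∀ x ∈ A, 0 < ⟪v, ((x : Metric.sphere (0 : EuclideanSpace ℝ (Fin (n + 1))) 1) :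
      EuclideanSpace ℝ (Fin (n + 1)))⟫) :
    ∃ h : C(Metric.sphere (0 : EuclideanSpace ℝ (Fin (n + 1))) 1,
        Metric.sphere (0 : EuclideanSpace ℝ (Fin (n + 1))) 1),
      LipschitzWith 1 h ∧ h.Nullhomotopic ∧ ∀ x ∈ A, h x = x := by
  have hvv : ⟪v, v⟫ = 1 := by
    rw [real_inner_self_eq_norm_sq, hv]; norm_num
  set h0 : EuclideanSpace ℝ (Fin (n + 1)) → EuclideanSpace ℝ (Fin (n + 1)) :=
    fun x => x + (|⟪v, x⟫| - ⟪v, x⟫) • v with h0def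
  have hinner : Continuous fun x : EuclideanSpace ℝ (Fin (n + 1)) => (⟪v, x⟫ : ℝ) :=
    Continuous.inner continuous_const continuous_id
  have h0cont : Continuous h0 :=
    continuous_id.add (((continuous_abs.comp hinner).sub hinner).smul continuous_const)
  -- norm preserved
  have hnorm : ∀ x, ‖h0 x‖ = ‖x‖ := by
    intro x
    have h1 : ‖h0 x‖ ^ 2 = ‖x‖ ^ 2 := by
      rw [h0def]
      rw [norm_add_sq_real, real_inner_smul_right, norm_smul, hv, mul_one,
        Real.norm_eq_abs, sq_abs, real_inner_comm x v]
      rcases abs_cases (⟪x, v⟫ : ℝ) with ⟨h, _⟩ | ⟨h, _⟩ <;> rw [h] <;> ring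
    nlinarith [norm_nonneg (h0 x), norm_nonneg x]
  -- 1-Lipschitz
  have hlip0 : ∀ x y, ‖h0 x - h0 y‖ ≤ ‖x - y‖ := by
    intro x y
    set s := (⟪v, x⟫ : ℝ) with hs
    set t := (⟪v, y⟫ : ℝ) with hts
    have hdiff : h0 x - h0 y = (x - y) + ((|s| - s) - (|t| - t)) • v := by
      rw [h0def]; simp only [sub_smul]; abel
    have h1 : ‖h0 x - h0 y‖ ^ 2 ≤ ‖x - y‖ ^ 2 := by
      rw [hdiff, norm_add_sq_real]
      have h2 : ⟪x - y, ((|s| - s) - (|t| - t)) • v⟫ = ((|s| - s) - (|t| - t)) * (s - t) := by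
        rw [real_inner_smul_right, inner_sub_left, real_inner_comm v x, real_inner_comm v y]
      rw [h2, norm_smul, hv, mul_one, Real.norm_eq_abs, sq_abs]
      have hs2 : |s| * |s| = s * s := abs_mul_abs_self s
      have ht2 : |t| * |t| = t * t := abs_mul_abs_self t
      nlinarith [mul_nonneg (sub_nonneg.2 (le_abs_self s)) (sub_nonneg.2 (neg_abs_le t)),
        mul_nonneg (sub_nonneg.2 (le_abs_self t)) (sub_nonneg.2 (neg_abs_le s))]
    have := norm_nonneg (h0 x - h0 y)
    have := norm_nonneg (x - y)
    nlinarith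
  -- inner with v
  have hinner_abs : ∀ x, ⟪v, h0 x⟫ = |⟪v, x⟫| := by
    intro x
    rw [h0def]
    simp only [inner_add_right, real_inner_smul_right, hvv]
    ring
  have hmem : ∀ x : Metric.sphere (0 : EuclideanSpace ℝ (Fin (n + 1))) 1,
      h0 x ∈ Metric.sphere (0 : EuclideanSpace ℝ (Fin (n + 1))) 1 := by
    intro x
    have hx := x.2
    simp only [mem_sphere_iff_norm, sub_zero] at hx ⊢
    rw [hnorm]; exact hx
  set h : C(Metric.sphere (0 : EuclideanSpace ℝ (Fin (n + 1))) 1,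
      Metric.sphere (0 : EuclideanSpace ℝ (Fin (n + 1))) 1) :=
    ⟨fun x => ⟨h0 x, hmem x⟩, Continuous.subtype_mk (h0cont.comp continuous_subtype_val) _⟩
    with hdef
  refine ⟨h, ?_, ?_, ?_⟩
  · refine LipschitzWith.of_dist_le_mul fun x y => ?_
    simp only [hdef, ContinuousMap.coe_mk, Subtype.dist_eq, NNReal.coe_one, one_mul]
    simpa [dist_eq_norm] using hlip0 x y
  · set vS : Metric.sphere (0 : EuclideanSpace ℝ (Fin (n + 1))) 1 :=
      ⟨v, by simp [hv]⟩ with hvS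
    refine ⟨vS, ⟨?_⟩⟩
    set w : I × Metric.sphere (0 : EuclideanSpace ℝ (Fin (n + 1))) 1 →
        EuclideanSpace ℝ (Fin (n + 1)) :=
      fun p => (1 - (p.1 : ℝ)) • h0 p.2 + (p.1 : ℝ) • v with wdef
    have hwcont : Continuous w := by
      apply Continuous.add
      · exact (continuous_const.sub (continuous_subtype_val.comp continuous_fst)).smul
          (h0cont.comp (continuous_subtype_val.comp continuous_snd))
      · exact (continuous_subtype_val.comp continuous_fst).smul continuous_const
    have hwne : ∀ p, w p ≠ 0 := by
      intro p
      rcases eq_or_lt_of_le p.1.2.1 with h0t | h0t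
      · have hw : w p = h0 p.2 := by rw [wdef]; simp [← h0t]
        rw [hw]
        intro hc
        have h3 := hnorm (p.2 : EuclideanSpace ℝ (Fin (n + 1)))
        rw [hc] at h3
        have h2 := (p.2).2
        simp only [mem_sphere_iff_norm, sub_zero] at h2
        rw [h2] at h3
        simp at h3
      · intro hc
        have h1 : ⟪v, w p⟫ = (1 - (p.1 : ℝ)) * |⟪v, ((p.2 : Metric.sphere
            (0 : EuclideanSpace ℝ (Fin (n + 1))) 1) : EuclideanSpace ℝ (Fin (n + 1)))⟫|
            + (p.1 : ℝ) := by
          rw [wdef]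
          simp only [inner_add_right, real_inner_smul_right, hvv, hinner_abs]
          ring
        rw [hc, inner_zero_right] at h1
        have h2 : (0:ℝ) ≤ (1 - (p.1 : ℝ)) * |⟪v, ((p.2 : Metric.sphere
            (0 : EuclideanSpace ℝ (Fin (n + 1))) 1) : EuclideanSpace ℝ (Fin (n + 1)))⟫| :=
          mul_nonneg (by linarith [p.1.2.2]) (abs_nonneg _)
        linarith
    have hwnorm : ∀ p, ‖w p‖ ≠ 0 := fun p => norm_ne_zero_iff.2 (hwne p)
    refine ⟨⟨fun p => ⟨‖w p‖⁻¹ • w p, ?_⟩, ?_⟩, ?_, ?_⟩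
    · simp only [mem_sphere_iff_norm, sub_zero, norm_smul, norm_inv, norm_norm]
      exact inv_mul_cancel₀ (hwnorm p)
    · exact Continuous.subtype_mk (((hwcont.norm).inv₀ hwnorm).smul hwcont) _
    · intro x
      ext
      have hw0 : w (0, x) = h0 x := by rw [wdef]; simp
      have h1 : ‖h0 (x : EuclideanSpace ℝ (Fin (n + 1)))‖ = 1 := by
        rw [hnorm]
        have hx := x.2
        simp only [mem_sphere_iff_norm, sub_zero] at hx; exact hx
      simp [hw0, hdef, h1]
    · intro x
      ext
      have hw1 : w (1, x) = v := by rw [wdef]; simp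
      simp [hw1, hv, hvS]
  · intro x hx
    have ht := hAhemi x hx
    have habs : |⟪v, ((x : Metric.sphere (0 : EuclideanSpace ℝ (Fin (n + 1))) 1) :
        EuclideanSpace ℝ (Fin (n + 1)))⟫| - ⟪v, ((x : Metric.sphere
        (0 : EuclideanSpace ℝ (Fin (n + 1))) 1) : EuclideanSpace ℝ (Fin (n + 1)))⟫ = 0 := by
      rw [abs_of_pos ht]; ring
    refine Subtype.ext ?_
    show ((x : EuclideanSpace ℝ (Fin (n + 1))) + (|⟪v, ((x : Metric.sphere
        (0 : EuclideanSpace ℝ (Fin (n + 1))) 1) : EuclideanSpace ℝ (Fin (n + 1)))⟫|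
        - ⟪v, ((x : Metric.sphere (0 : EuclideanSpace ℝ (Fin (n + 1))) 1) :
        EuclideanSpace ℝ (Fin (n + 1)))⟫) • v) = (x : EuclideanSpace ℝ (Fin (n + 1)))
    rw [habs, zero_smul, add_zero]
end

section
/- Let E be a real inner product space, v ∈ E a unit vector, and h_v the fold map along v^⊥. Suppose x, y ∈ E satisfy ⟪v, x⟫ ≠ 0, ⟪v, y⟫ ≠ 0, x ≠ y, and x − y is not a scalar multiple of v. Then h_v(x) ≠ h_v(y). -/
open RealInnerProductSpace

/-- If `x` and `y` are distinct points, neither orthogonal to the unit vector `v`, and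
whose difference is not parallel to `v`, then the fold map along `v^⊥` separates them. -/
theorem foldMap_injective_on_generic_points
    {E : Type*} [NormedAddCommGroup E] [InnerProductSpace ℝ E]
    (v : E) (hv : ‖v‖ = 1) (x y : E)
    (hx : ⟪v, x⟫ ≠ 0) (hy : ⟪v, y⟫ ≠ 0) (hxy : x ≠ y)
    (hpar : ∀ c : ℝ, x - y ≠ c • v) :
    foldMap v x ≠ foldMap v y := by
  unfold foldMap
  intro h
  split_ifs at h with h1 h2 h2
  · exact hxy h
  · exact hpar (-(2 * ⟪v, y⟫)) (by rw [neg_smul]; linear_combination (norm := module) h)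
  · exact hpar (2 * ⟪v, x⟫) (by linear_combination (norm := module) h)
  · exact hpar (2 * ⟪v, x⟫ - 2 * ⟪v, y⟫) (by rw [sub_smul]; linear_combination (norm := module) h)
end

section
/- Let n and ℓ be natural numbers with 3 ≤ ℓ ≤ n − 1, and let a > 0 be a real number. Then there exists a constant C ≥ 1 such that for every r ∈ (0, a], C^{−1} · r^{2−ℓ} ≤ ∫₀^a t^{n−ℓ−1} (r² + t²)^{−(n−2)/2} dt ≤ C · r^{2−ℓ}. -/
/-!
Substituting `t = r s` turns the integral into
`r ^ (2 - ℓ) * ∫₀^{a/r} s^{n-ℓ-1} (1 + s²)^{-(n-2)/2} ds`. The profile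
`s^{n-ℓ-1} (1 + s²)^{-(n-2)/2}` is positive and decays like `s^{1-ℓ}`, which is integrable at
infinity exactly when `ℓ ≥ 3`; hence, as `a / r ≥ 1`, the remaining integral lies between the
positive constants `∫₀^1` and `∫₀^∞` of the profile.
-/

open MeasureTheory Set

theorem integral_pow_mul_sq_add_sq_rpow (m : ℕ) (e a : ℝ) {r : ℝ} (hr : 0 < r) :
    ∫ t in (0 : ℝ)..a, t ^ m * (r ^ 2 + t ^ 2) ^ e
      = r ^ ((m : ℝ) + 1 + 2 * e) * ∫ s in (0 : ℝ)..a / r, s ^ m * (1 + s ^ 2) ^ e := by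
  have hscale : ∀ s : ℝ, (r * s) ^ m * (r ^ 2 + (r * s) ^ 2) ^ e
      = r ^ ((m : ℝ) + 2 * e) * (s ^ m * (1 + s ^ 2) ^ e) := by
    intro s
    rw [show r ^ 2 + (r * s) ^ 2 = r ^ 2 * (1 + s ^ 2) by ring,
      Real.mul_rpow (by positivity) (by positivity), mul_pow, Real.rpow_add hr,
      Real.rpow_natCast, Real.rpow_mul hr.le, Real.rpow_two]
    ring
  calc ∫ t in (0 : ℝ)..a, t ^ m * (r ^ 2 + t ^ 2) ^ e
      = r * ∫ s in (0 : ℝ)..a / r, (r * s) ^ m * (r ^ 2 + (r * s) ^ 2) ^ e := by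
        rw [← smul_eq_mul, intervalIntegral.smul_integral_comp_mul_left
          (fun t => t ^ m * (r ^ 2 + t ^ 2) ^ e), mul_zero, mul_div_cancel₀ _ hr.ne']
    _ = r ^ ((m : ℝ) + 1 + 2 * e) * ∫ s in (0 : ℝ)..a / r, s ^ m * (1 + s ^ 2) ^ e := by
        simp only [hscale, intervalIntegral.integral_const_mul]
        rw [← mul_assoc, show (m : ℝ) + 1 + 2 * e = 1 + ((m : ℝ) + 2 * e) by ring,
          Real.rpow_add hr 1, Real.rpow_one]

section Profile

variable {m : ℕ} {e : ℝ}

theorem continuous_pow_mul_one_add_sq_rpow : Continuous fun s : ℝ => s ^ m * (1 + s ^ 2) ^ e :=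
  (continuous_pow m).mul <| (continuous_const.add (continuous_pow 2)).rpow_const
    fun s => Or.inl (by show (1 : ℝ) + s ^ 2 ≠ 0; positivity)

theorem pow_mul_one_add_sq_rpow_le (he : e ≤ 0) {s : ℝ} (hs : 0 < s) :
    s ^ m * (1 + s ^ 2) ^ e ≤ s ^ ((m : ℝ) + 2 * e) := by
  calc s ^ m * (1 + s ^ 2) ^ e ≤ s ^ m * (s ^ 2) ^ e :=
        mul_le_mul_of_nonneg_left (Real.rpow_le_rpow_of_nonpos (by positivity) (by linarith) he)
          (by positivity)
    _ = s ^ ((m : ℝ) + 2 * e) := by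
        rw [Real.rpow_add hs, Real.rpow_natCast, ← Real.rpow_two, ← Real.rpow_mul hs.le]

theorem integrableOn_Ioi_pow_mul_one_add_sq_rpow (h : (m : ℝ) + 2 * e < -1) :
    IntegrableOn (fun s : ℝ => s ^ m * (1 + s ^ 2) ^ e) (Ioi 0) := by
  have he : e ≤ 0 := by nlinarith [(m.cast_nonneg : (0 : ℝ) ≤ m)]
  rw [← Ioc_union_Ioi_eq_Ioi zero_le_one]
  refine (continuous_pow_mul_one_add_sq_rpow.integrableOn_Icc.mono_set Ioc_subset_Icc_self).union ?_
  refine (integrableOn_Ioi_rpow_of_lt h one_pos).mono'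
    continuous_pow_mul_one_add_sq_rpow.aestronglyMeasurable.restrict ?_
  refine (ae_restrict_mem measurableSet_Ioi).mono fun s (hs : 1 < s) => ?_
  rw [Real.norm_of_nonneg (by positivity)]
  exact pow_mul_one_add_sq_rpow_le he (one_pos.trans hs)

theorem exists_bounds_integral_pow_mul_one_add_sq_rpow (h : (m : ℝ) + 2 * e < -1) :
    ∃ C : ℝ, 1 ≤ C ∧ ∀ x ≥ (1 : ℝ),
      C⁻¹ ≤ ∫ s in (0 : ℝ)..x, s ^ m * (1 + s ^ 2) ^ e ∧
        ∫ s in (0 : ℝ)..x, s ^ m * (1 + s ^ 2) ^ e ≤ C := by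
  set g : ℝ → ℝ := fun s => s ^ m * (1 + s ^ 2) ^ e
  have hg : Continuous g := continuous_pow_mul_one_add_sq_rpow
  have hg_nonneg : ∀ s ∈ Ioi (0 : ℝ), 0 ≤ g s := fun s (hs : 0 < s) => by positivity
  set I₁ := ∫ s in (0 : ℝ)..1, g s
  set I := ∫ s in Ioi 0, g s
  have hI₁_pos : 0 < I₁ :=
    intervalIntegral.intervalIntegral_pos_of_pos_on (hg.intervalIntegrable 0 1)
      (fun s hs => by have : 0 < s := hs.1; positivity) one_pos
  set C := max 1 (max I I₁⁻¹)
  have hI₁_inv_le : I₁⁻¹ ≤ C := le_max_of_le_right (le_max_right _ _)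
  have hC_inv : C⁻¹ ≤ I₁ :=
    (inv_le_comm₀ ((inv_pos.2 hI₁_pos).trans_le hI₁_inv_le) hI₁_pos).2 hI₁_inv_le
  refine ⟨C, le_max_left _ _, fun x hx => ⟨?_, ?_⟩⟩
  · calc C⁻¹ ≤ I₁ := hC_inv
      _ ≤ ∫ s in (0 : ℝ)..x, g s :=
        intervalIntegral.integral_mono_interval le_rfl zero_le_one hx
          ((ae_restrict_mem measurableSet_Ioc).mono fun s hs => hg_nonneg s hs.1)
          (hg.intervalIntegrable 0 x)
  · calc ∫ s in (0 : ℝ)..x, g s = ∫ s in Ioc 0 x, g s :=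
          intervalIntegral.integral_of_le (zero_le_one.trans hx)
      _ ≤ I := setIntegral_mono_set (integrableOn_Ioi_pow_mul_one_add_sq_rpow h)
          ((ae_restrict_mem measurableSet_Ioi).mono hg_nonneg) Ioc_subset_Ioi_self.eventuallyLE
      _ ≤ C := le_max_of_le_right (le_max_left _ _)

end Profile

theorem green_integral_asymptotics_of_three_le_general
    (n ℓ : ℕ) (hl : 3 ≤ ℓ) (hn : ℓ + 1 ≤ n) (a : ℝ) :
    ∃ C : ℝ, 1 ≤ C ∧ ∀ r ∈ Set.Ioc (0 : ℝ) a,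
      C⁻¹ * r ^ ((2 : ℝ) - ℓ) ≤
          (∫ t in (0 : ℝ)..a, t ^ (n - ℓ - 1) * (r ^ 2 + t ^ 2) ^ (-((n : ℝ) - 2) / 2)) ∧
        (∫ t in (0 : ℝ)..a, t ^ (n - ℓ - 1) * (r ^ 2 + t ^ 2) ^ (-((n : ℝ) - 2) / 2)) ≤
          C * r ^ ((2 : ℝ) - ℓ) := by
  have hm : ((n - ℓ - 1 : ℕ) : ℝ) + 2 * (-((n : ℝ) - 2) / 2) = 1 - ℓ := by
    rw [Nat.sub_sub, Nat.cast_sub hn]; push_cast; ring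
  have hl' : (3 : ℝ) ≤ ℓ := by exact_mod_cast hl
  obtain ⟨C, hC, hbounds⟩ :=
    exists_bounds_integral_pow_mul_one_add_sq_rpow (m := n - ℓ - 1)
      (e := -((n : ℝ) - 2) / 2) (by linarith)
  refine ⟨C, hC, fun r ⟨hr, hra⟩ => ?_⟩
  rw [integral_pow_mul_sq_add_sq_rpow _ _ _ hr, add_right_comm, hm,
    show (1 : ℝ) - ℓ + 1 = 2 - ℓ by ring, mul_comm C⁻¹, mul_comm C]
  have hpos : 0 < r ^ ((2 : ℝ) - ℓ) := Real.rpow_pos_of_pos hr _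
  obtain ⟨hlower, hupper⟩ := hbounds (a / r) ((one_le_div hr).2 hra)
  exact ⟨mul_le_mul_of_nonneg_left hlower hpos.le, mul_le_mul_of_nonneg_left hupper hpos.le⟩

/-- Two-sided asymptotics `∫₀^a t^{n−ℓ−1}(r²+t²)^{−(n−2)/2} dt ∼ r^{2−ℓ}` when
`3 ≤ ℓ ≤ n − 1`. -/
theorem green_integral_asymptotics_of_three_le
    (n ℓ : ℕ) (hl : 3 ≤ ℓ) (hn : ℓ + 1 ≤ n) (a : ℝ) (ha : 0 < a) :
    ∃ C : ℝ, 1 ≤ C ∧ ∀ r ∈ Set.Ioc (0 : ℝ) a,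
      C⁻¹ * r ^ ((2 : ℝ) - ℓ) ≤
          (∫ t in (0 : ℝ)..a, t ^ (n - ℓ - 1) * (r ^ 2 + t ^ 2) ^ (-((n : ℝ) - 2) / 2)) ∧
        (∫ t in (0 : ℝ)..a, t ^ (n - ℓ - 1) * (r ^ 2 + t ^ 2) ^ (-((n : ℝ) - 2) / 2)) ≤
          C * r ^ ((2 : ℝ) - ℓ) :=
  green_integral_asymptotics_of_three_le_general n ℓ hl hn a
end

section
/- Let n ≥ 3 be a natural number and a > 0 a real number. Then there exists a constant C ≥ 1 such that for every r ∈ (0, min(a, 1/2)], C^{−1} · log(1/r) ≤ ∫₀^a t^{n−3} (r² + t²)^{−(n−2)/2} dt ≤ C · log(1/r). -/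
set_option maxHeartbeats 2000000


private lemma green_npow_eq_rpow {n : ℕ} (hn : 3 ≤ n) {t : ℝ} (ht : 0 ≤ t) :
    t ^ (n - 3) = t ^ ((n : ℝ) - 3) := by
  rw [← Real.rpow_natCast t (n - 3)]
  congr 1
  have h3 : ((3 : ℕ) : ℝ) = 3 := by norm_num
  rw [Nat.cast_sub hn, h3]

private lemma green_sq_rpow {t : ℝ} (ht : 0 ≤ t) (y : ℝ) :
    (t ^ 2) ^ y = t ^ (2 * y) := by
  rw [← Real.rpow_natCast t 2, ← Real.rpow_mul ht]
  norm_num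

/-- Logarithmic asymptotics `∫₀^a t^{n−3}(r²+t²)^{−(n−2)/2} dt ∼ log(1/r)`:
the case `ℓ = 2` of the Green-type integral estimates. -/
theorem green_integral_asymptotics_log
    (n : ℕ) (hn : 3 ≤ n) (a : ℝ) (ha : 0 < a) :
    ∃ C : ℝ, 1 ≤ C ∧ ∀ r ∈ Set.Ioc (0 : ℝ) (min a (1 / 2)),
      C⁻¹ * Real.log (1 / r) ≤
          (∫ t in (0 : ℝ)..a, t ^ (n - 3) * (r ^ 2 + t ^ 2) ^ (-((n : ℝ) - 2) / 2)) ∧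
        (∫ t in (0 : ℝ)..a, t ^ (n - 3) * (r ^ 2 + t ^ 2) ^ (-((n : ℝ) - 2) / 2)) ≤
          C * Real.log (1 / r) := by
  have hn3 : (3 : ℝ) ≤ (n : ℝ) := by exact_mod_cast hn
  set p : ℝ := -((n : ℝ) - 2) / 2 with hp
  have hpneg : p ≤ 0 := by rw [hp]; linarith
  set c : ℝ := (2 : ℝ) ^ p with hcdef
  have hc : 0 < c := Real.rpow_pos_of_pos two_pos p
  set b0 : ℝ := (a / 2) ^ (n - 3) * ((1 / 4 + a ^ 2) ^ p) with hb0def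
  have hb0 : 0 < b0 := by
    apply mul_pos (pow_pos (by linarith) _)
    exact Real.rpow_pos_of_pos (by positivity) _
  set m : ℝ := b0 * (a / 2) with hmdef
  have hm : 0 < m := mul_pos hb0 (by linarith)
  set L : ℝ := max 0 (Real.log a⁻¹) with hLdef
  have hL : 0 ≤ L := le_max_left _ _
  have hlog2 : 0 < Real.log 2 := Real.log_pos one_lt_two
  set K : ℝ := 1 + max 0 (Real.log a) with hKdef
  have hK : 0 < K := by
    have : (0:ℝ) ≤ max 0 (Real.log a) := le_max_left _ _
    linarith
  set Cup : ℝ := K / Real.log 2 + 1 with hCupdef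
  set Clow : ℝ := c⁻¹ + L / m with hClowdef
  have hClow : 0 < Clow := by
    have h1 : 0 < c⁻¹ := inv_pos.mpr hc
    have h2 : 0 ≤ L / m := div_nonneg hL hm.le
    rw [hClowdef]; linarith
  refine ⟨max 1 (max Cup Clow), le_max_left _ _, ?_⟩
  set C : ℝ := max 1 (max Cup Clow) with hCdef
  have hCup_le : Cup ≤ C := le_trans (le_max_left _ _) (le_max_right _ _)
  have hClow_le : Clow ≤ C := le_trans (le_max_right _ _) (le_max_right _ _)
  rintro r ⟨hr0, hrle⟩
  have hra : r ≤ a := le_trans hrle (min_le_left _ _)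
  have hr2 : r ≤ 1 / 2 := le_trans hrle (min_le_right _ _)
  -- log (1/r) ≥ log 2 > 0
  have h2r : (2 : ℝ) ≤ 1 / r := by
    rw [le_div_iff₀ hr0]; linarith
  have hlogr : Real.log 2 ≤ Real.log (1 / r) := Real.log_le_log two_pos h2r
  have hlogr0 : 0 < Real.log (1 / r) := lt_of_lt_of_le hlog2 hlogr
  have hlog1r : Real.log (1 / r) = -Real.log r := by
    rw [one_div, Real.log_inv]
  -- the integrand
  set f : ℝ → ℝ := fun t => t ^ (n - 3) * (r ^ 2 + t ^ 2) ^ p with hfdef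
  have hbpos : ∀ t : ℝ, (0 : ℝ) < r ^ 2 + t ^ 2 := fun t => by positivity
  have hcont : Continuous f := by
    apply (continuous_pow _).mul
    exact (continuous_const.add (continuous_pow 2)).rpow_const
      (fun t => Or.inl (hbpos t).ne')
  have hint : ∀ u v : ℝ, IntervalIntegrable f MeasureTheory.volume u v :=
    fun u v => hcont.intervalIntegrable u v
  have hfnn : ∀ t : ℝ, 0 ≤ t → 0 ≤ f t := fun t ht =>
    mul_nonneg (pow_nonneg ht _) (Real.rpow_nonneg (hbpos t).le _)
  -- key upper pointwise bound
  have key : ∀ t : ℝ, 0 ≤ t → f t ≤ (r ^ 2 + t ^ 2) ^ (-1 / 2 : ℝ) := by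
    intro t ht
    have hb := hbpos t
    have h1 : t ^ (n - 3) ≤ (r ^ 2 + t ^ 2) ^ (((n : ℝ) - 3) / 2) := by
      rw [green_npow_eq_rpow hn ht]
      calc t ^ ((n : ℝ) - 3) = (t ^ 2) ^ (((n : ℝ) - 3) / 2) := by
            rw [green_sq_rpow ht]; congr 1; ring
        _ ≤ (r ^ 2 + t ^ 2) ^ (((n : ℝ) - 3) / 2) :=
            Real.rpow_le_rpow (by positivity) (by nlinarith) (by linarith)
    calc f t ≤ (r ^ 2 + t ^ 2) ^ (((n : ℝ) - 3) / 2) * (r ^ 2 + t ^ 2) ^ p :=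
          mul_le_mul_of_nonneg_right h1 (Real.rpow_nonneg hb.le _)
      _ = (r ^ 2 + t ^ 2) ^ (((n : ℝ) - 3) / 2 + p) := (Real.rpow_add hb _ _).symm
      _ = (r ^ 2 + t ^ 2) ^ (-1 / 2 : ℝ) := by rw [hp]; congr 1; ring
  have boundA : ∀ t : ℝ, 0 ≤ t → f t ≤ r⁻¹ := by
    intro t ht
    refine le_trans (key t ht) ?_
    have h1 : (r ^ 2 + t ^ 2) ^ (-1 / 2 : ℝ) ≤ (r ^ 2) ^ (-1 / 2 : ℝ) :=
      Real.rpow_le_rpow_of_nonpos (by positivity) (by nlinarith) (by norm_num)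
    refine le_trans h1 (le_of_eq ?_)
    rw [green_sq_rpow hr0.le]
    norm_num [Real.rpow_neg_one]
  have boundB : ∀ t : ℝ, 0 < t → f t ≤ t⁻¹ := by
    intro t ht
    refine le_trans (key t ht.le) ?_
    have h1 : (r ^ 2 + t ^ 2) ^ (-1 / 2 : ℝ) ≤ (t ^ 2) ^ (-1 / 2 : ℝ) :=
      Real.rpow_le_rpow_of_nonpos (by positivity) (by nlinarith) (by norm_num)
    refine le_trans h1 (le_of_eq ?_)
    rw [green_sq_rpow ht.le]
    norm_num [Real.rpow_neg_one]
  -- key lower pointwise bound on [r, a]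
  have low : ∀ t : ℝ, r ≤ t → c * t⁻¹ ≤ f t := by
    intro t hrt
    have ht : 0 < t := lt_of_lt_of_le hr0 hrt
    have h1 : (2 * t ^ 2) ^ p ≤ (r ^ 2 + t ^ 2) ^ p :=
      Real.rpow_le_rpow_of_nonpos (hbpos t) (by nlinarith) hpneg
    have h2 : t ^ (n - 3) * (2 * t ^ 2) ^ p ≤ f t :=
      mul_le_mul_of_nonneg_left h1 (pow_nonneg ht.le _)
    refine le_trans (le_of_eq ?_) h2
    rw [Real.mul_rpow (by norm_num) (by positivity), green_sq_rpow ht.le,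
      green_npow_eq_rpow hn ht.le, hcdef]
    have he : t ^ ((n : ℝ) - 3) * t ^ (2 * p) = t⁻¹ := by
      rw [← Real.rpow_add ht]
      have h3 : ((n : ℝ) - 3) + 2 * p = -1 := by rw [hp]; ring
      rw [h3, Real.rpow_neg_one]
    rw [← he]; ring
  -- integrability of t⁻¹ on [r,a]
  have hinv_int : IntervalIntegrable (fun t : ℝ => t⁻¹) MeasureTheory.volume r a := by
    apply ContinuousOn.intervalIntegrable
    apply ContinuousOn.inv₀ continuousOn_id
    intro x hx
    rw [Set.uIcc_of_le hra] at hx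
    exact (lt_of_lt_of_le hr0 hx.1).ne'
  -- the integral splits
  have hsplit : (∫ t in (0:ℝ)..a, f t) = (∫ t in (0:ℝ)..r, f t) + ∫ t in r..a, f t :=
    (intervalIntegral.integral_add_adjacent_intervals (hint 0 r) (hint r a)).symm
  have hsplit2 : (∫ t in (0:ℝ)..a, f t) =
      (∫ t in (0:ℝ)..(a/2), f t) + ∫ t in (a/2)..a, f t :=
    (intervalIntegral.integral_add_adjacent_intervals (hint 0 (a/2)) (hint (a/2) a)).symm
  -- upper bounds
  have h1 : (∫ t in (0:ℝ)..r, f t) ≤ 1 := by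
    have := intervalIntegral.integral_mono_on hr0.le (hint 0 r)
      (intervalIntegrable_const (c := r⁻¹)) (fun t htm => boundA t htm.1)
    rwa [intervalIntegral.integral_const, smul_eq_mul, sub_zero,
      mul_inv_cancel₀ hr0.ne'] at this
  have h2 : (∫ t in r..a, f t) ≤ Real.log a - Real.log r := by
    have := intervalIntegral.integral_mono_on hra (hint r a) hinv_int
      (fun t ht => boundB t (lt_of_lt_of_le hr0 ht.1))
    rwa [integral_inv_of_pos hr0 ha, Real.log_div ha.ne' hr0.ne'] at this
  -- lower bounds
  have h3 : 0 ≤ ∫ t in (0:ℝ)..r, f t :=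
    intervalIntegral.integral_nonneg hr0.le (fun t ht => hfnn t ht.1)
  have h4 : c * (Real.log a - Real.log r) ≤ ∫ t in r..a, f t := by
    have := intervalIntegral.integral_mono_on hra (hinv_int.const_mul c)
      (hint r a) (fun t ht => low t ht.1)
    rwa [intervalIntegral.integral_const_mul, integral_inv_of_pos hr0 ha,
      Real.log_div ha.ne' hr0.ne'] at this
  have h5 : m ≤ ∫ t in (0:ℝ)..a, f t := by
    have hnn : 0 ≤ ∫ t in (0:ℝ)..(a/2), f t :=
      intervalIntegral.integral_nonneg (by linarith) (fun t ht => hfnn t ht.1)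
    have hpt : ∀ t ∈ Set.Icc (a/2) a, b0 ≤ f t := by
      intro t ht
      have ht0 : 0 ≤ t := le_trans (by linarith) ht.1
      refine mul_le_mul (pow_le_pow_left₀ (by linarith) ht.1 _) ?_
        (Real.rpow_nonneg (by positivity) _) (pow_nonneg ht0 _)
      exact Real.rpow_le_rpow_of_nonpos (hbpos t) (by nlinarith [ht.2]) hpneg
    have hb := intervalIntegral.integral_mono_on (by linarith : a/2 ≤ a)
      (intervalIntegrable_const (c := b0)) (hint (a/2) a) hpt
    rw [intervalIntegral.integral_const, smul_eq_mul] at hb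
    have : m ≤ (a - a/2) * b0 := by rw [hmdef]; nlinarith
    rw [hsplit2]; linarith
  have hI := hsplit
  set I : ℝ := ∫ t in (0:ℝ)..a, f t with hIdef
  -- upper bound conclusion
  have hup : I ≤ C * Real.log (1 / r) := by
    have hIle : I ≤ 1 + (Real.log a - Real.log r) := by rw [hI]; linarith
    have hK1 : 1 + Real.log a ≤ K := by
      rw [hKdef]; have := le_max_right (0:ℝ) (Real.log a); linarith
    have hKle : K ≤ K / Real.log 2 * Real.log (1 / r) := by
      have h := mul_le_mul_of_nonneg_left hlogr (le_of_lt (div_pos hK hlog2))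
      rwa [div_mul_cancel₀ _ hlog2.ne'] at h
    have : I ≤ K / Real.log 2 * Real.log (1 / r) + Real.log (1 / r) := by
      rw [hlog1r] at *; linarith
    calc I ≤ Cup * Real.log (1 / r) := by rw [hCupdef]; linarith [this]
      _ ≤ C * Real.log (1 / r) := mul_le_mul_of_nonneg_right hCup_le hlogr0.le
  -- lower bound conclusion
  have hlowI : C⁻¹ * Real.log (1 / r) ≤ I := by
    have hX : Real.log a - Real.log r ≤ c⁻¹ * I := by
      have hcI : c * (Real.log a - Real.log r) ≤ I := by rw [hI]; linarith
      have := mul_le_mul_of_nonneg_left hcI (inv_nonneg.mpr hc.le)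
      rwa [← mul_assoc, inv_mul_cancel₀ hc.ne', one_mul] at this
    have hLm : L ≤ L / m * I := by
      have := mul_le_mul_of_nonneg_left h5 (div_nonneg hL hm.le)
      rwa [div_mul_cancel₀ _ hm.ne'] at this
    have hlog_le : Real.log (1 / r) ≤ Real.log a - Real.log r + L := by
      have : Real.log a⁻¹ ≤ L := le_max_right _ _
      rw [hlog1r]; rw [Real.log_inv] at this; linarith
    have hClowI : Real.log (1 / r) ≤ Clow * I := by
      rw [hClowdef, add_mul]; linarith
    have hCinv : C⁻¹ ≤ Clow⁻¹ := inv_anti₀ hClow hClow_le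
    calc C⁻¹ * Real.log (1 / r) ≤ Clow⁻¹ * Real.log (1 / r) :=
          mul_le_mul_of_nonneg_right hCinv hlogr0.le
      _ ≤ Clow⁻¹ * (Clow * I) :=
          mul_le_mul_of_nonneg_left hClowI (inv_nonneg.mpr hClow.le)
      _ = I := by rw [← mul_assoc, inv_mul_cancel₀ hClow.ne', one_mul]
  exact ⟨hlowI, hup⟩
end
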